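/- Let N ≥ 1 be an integer, let h : ℝ → ℝ be continuous with H(t) = ∫_0^t h(τ) dτ, and assume (h3): the map t ↦ (h(t)t − 2H(t)) / (|t|^(3+4/N) t) is nondecreasing on (−∞,0) and on (0,+∞). If v : ℝ^N → ℝ is continuously differentiable with compact support and 𝒢(v) = 0, then Ψ(v) ≥ Ψ(v_t) for every t > 0; since v_1 = v, this means Ψ(v) = max_{t>0} Ψ(v_t). -/

import Mathlib

set_option maxHeartbeats 1000000

open MeasureTheory

/-- `g(s) = ∫_0^s √(1 + 2τ²) dτ`, the inverse of the dual function `f`. -/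
noncomputable def g (s : ℝ) : ℝ := ∫ τ in (0:ℝ)..s, Real.sqrt (1 + 2 * τ ^ 2)

/-- The dual function `f = g⁻¹`. -/
noncomputable def f : ℝ → ℝ := Function.invFun g

/-- The mass-preserving stretching `v_t(x) = f⁻¹(t^{N/2} f(v(tx)))`. -/
noncomputable def stretch {N : ℕ} (t : ℝ) (v : EuclideanSpace ℝ (Fin N) → ℝ) :
    EuclideanSpace ℝ (Fin N) → ℝ :=
  fun x => Function.invFun f (t ^ ((N:ℝ) / 2) * f (v (t • x)))

/-- The dual energy functional `Ψ(v) = (1/2)∫|∇v|² − ∫ H(f(v))`. -/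
noncomputable def Psi {N : ℕ} (H : ℝ → ℝ) (v : EuclideanSpace ℝ (Fin N) → ℝ) : ℝ :=
  (1 / 2) * (∫ x : EuclideanSpace ℝ (Fin N), ‖gradient v x‖ ^ 2)
    - ∫ x : EuclideanSpace ℝ (Fin N), H (f (v x))

/-- The Pohozaev-type functional `𝒢`. -/
noncomputable def Gfun {N : ℕ} (h H : ℝ → ℝ) (v : EuclideanSpace ℝ (Fin N) → ℝ) : ℝ :=
  (∫ x : EuclideanSpace ℝ (Fin N), ‖gradient v x‖ ^ 2)
    + (N:ℝ) / 2 * (∫ x : EuclideanSpace ℝ (Fin N),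
        (2 * (f (v x)) ^ 2 / (1 + 2 * (f (v x)) ^ 2)) * ‖gradient v x‖ ^ 2)
    - (N:ℝ) / 2 * (∫ x : EuclideanSpace ℝ (Fin N),
        (h (f (v x)) * f (v x) - 2 * H (f (v x))))

lemma sq_cont : Continuous (fun τ : ℝ => Real.sqrt (1 + 2 * τ ^ 2)) := by fun_prop

lemma sq_pos (τ : ℝ) : 0 < Real.sqrt (1 + 2 * τ ^ 2) :=
  Real.sqrt_pos.mpr (by positivity)

lemma g_hasDerivAt (s : ℝ) : HasDerivAt g (Real.sqrt (1 + 2 * s ^ 2)) s :=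
  (sq_cont.integral_hasStrictDerivAt 0 s).hasDerivAt

lemma g_cont : Continuous g :=
  continuous_iff_continuousAt.mpr fun s => (g_hasDerivAt s).continuousAt

lemma g_mono : StrictMono g :=
  strictMono_of_deriv_pos fun s => by rw [(g_hasDerivAt s).deriv]; exact sq_pos s

lemma g_zero : g 0 = 0 := intervalIntegral.integral_same

lemma one_le_sq (τ : ℝ) : 1 ≤ Real.sqrt (1 + 2 * τ ^ 2) := by
  nlinarith [Real.sq_sqrt (show (0:ℝ) ≤ 1 + 2 * τ ^ 2 by positivity),
    Real.sqrt_nonneg (1 + 2 * τ ^ 2), sq_nonneg τ]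

lemma g_ge {s : ℝ} (hs : 0 ≤ s) : s ≤ g s := by
  have h1 : (∫ τ in (0:ℝ)..s, (1:ℝ)) ≤ g s := by
    apply intervalIntegral.integral_mono_on hs (by simp) (sq_cont.intervalIntegrable _ _)
    intro x _; simpa using one_le_sq x
  simpa using h1

lemma g_le {s : ℝ} (hs : s ≤ 0) : g s ≤ s := by
  have h1 : (∫ τ in s..(0:ℝ), (1:ℝ)) ≤ ∫ τ in s..(0:ℝ), Real.sqrt (1 + 2 * τ ^ 2) := by
    apply intervalIntegral.integral_mono_on hs (by simp) (sq_cont.intervalIntegrable _ _)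
    intro x _; simpa using one_le_sq x
  have h2 : (∫ τ in s..(0:ℝ), Real.sqrt (1 + 2 * τ ^ 2)) = - g s := by
    rw [intervalIntegral.integral_symm]; rfl
  have h3 : (∫ τ in s..(0:ℝ), (1:ℝ)) = 0 - s := by simp
  rw [h2, h3] at h1
  linarith

lemma g_surj : Function.Surjective g := by
  intro y
  have ha : g (-(|y| + 1)) ≤ y := le_trans (g_le (by nlinarith [abs_nonneg y])) (by cases abs_cases y <;> linarith)
  have hb : y ≤ g (|y| + 1) := le_trans (by cases abs_cases y <;> linarith) (g_ge (by positivity))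
  obtain ⟨s, _, hs⟩ := intermediate_value_Icc (by nlinarith [abs_nonneg y]) (g_cont.continuousOn)
    (Set.mem_Icc.mpr ⟨ha, hb⟩)
  exact ⟨s, hs⟩

lemma f_g (s : ℝ) : f (g s) = s := Function.leftInverse_invFun g_mono.injective s

lemma g_f (y : ℝ) : g (f y) = y := Function.invFun_eq (g_surj y)

lemma f_inj : Function.Injective f := by
  intro a b hab
  have := congrArg g hab
  rwa [g_f, g_f] at this

lemma invFun_f : Function.invFun f = g := by
  funext y
  conv_lhs => rw [show y = f (g y) from (f_g y).symm]
  exact Function.leftInverse_invFun f_inj (g y)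

lemma f_zero : f 0 = 0 := by have := f_g 0; rwa [g_zero] at this

lemma f_mono : StrictMono f := by
  intro a b hab
  by_contra hle
  push_neg at hle
  have := g_mono.monotone hle
  rw [g_f, g_f] at this
  linarith

lemma f_surj : Function.Surjective f := fun s => ⟨g s, f_g s⟩

lemma f_cont : Continuous f := f_mono.monotone.continuous_of_surjective f_surj

lemma f_hasDerivAt (y : ℝ) :
    HasDerivAt f ((Real.sqrt (1 + 2 * (f y) ^ 2))⁻¹) y :=
  HasDerivAt.of_local_left_inverse f_cont.continuousAt (g_hasDerivAt (f y))
    (sq_pos _).ne' (Filter.Eventually.of_forall g_f)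

section B
variable {E : Type*} [NormedAddCommGroup E] [InnerProductSpace ℝ E] [CompleteSpace E]

lemma hasGradientAt_comp_smul (v : E → ℝ) (φ : ℝ → ℝ) (t d : ℝ) (x : E)
    (hv : DifferentiableAt ℝ v (t • x)) (hφ : HasDerivAt φ d (v (t • x))) :
    HasGradientAt (fun x => φ (v (t • x))) ((d * t) • gradient v (t • x)) x := by
  have h1 : HasFDerivAt (fun y : E => t • y) (t • ContinuousLinearMap.id ℝ E) x :=
    (t • ContinuousLinearMap.id ℝ E).hasFDerivAt
  have h2 : HasFDerivAt v ((InnerProductSpace.toDual ℝ E) (gradient v (t • x))) (t • x) :=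
    hasGradientAt_iff_hasFDerivAt.mp hv.hasGradientAt
  have h3 : HasFDerivAt φ ((1 : ℝ →L[ℝ] ℝ).smulRight d) (v (t • x)) :=
    hasDerivAt_iff_hasFDerivAt.mp hφ
  have h4 := h3.comp x (h2.comp x h1)
  rw [hasGradientAt_iff_hasFDerivAt]
  refine h4.congr_fderiv ?_
  apply ContinuousLinearMap.ext
  intro w
  simp [InnerProductSpace.toDual_apply_apply, real_inner_smul_left, inner_smul_right]
  ring

lemma gradient_comp_smul_norm_sq (v : E → ℝ) (φ : ℝ → ℝ) (t d : ℝ) (x : E)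
    (hv : DifferentiableAt ℝ v (t • x)) (hφ : HasDerivAt φ d (v (t • x))) :
    ‖gradient (fun x => φ (v (t • x))) x‖ ^ 2 = (d * t) ^ 2 * ‖gradient v (t • x)‖ ^ 2 := by
  rw [(hasGradientAt_comp_smul v φ t d x hv hφ).gradient, norm_smul]
  rw [Real.norm_eq_abs, mul_pow, sq_abs]

end B

lemma phi_hasDerivAt (c u : ℝ) : HasDerivAt (fun w => g (c * f w))
    (Real.sqrt (1 + 2 * (c * f u) ^ 2) * (c * (Real.sqrt (1 + 2 * (f u) ^ 2))⁻¹)) u := by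
  have := (g_hasDerivAt (c * f u)).comp u ((f_hasDerivAt u).const_mul c); exact this

section Formula

variable {N : ℕ} {v : EuclideanSpace ℝ (Fin N) → ℝ} {H h : ℝ → ℝ}

local notation "E" => EuclideanSpace ℝ (Fin N)

lemma stretch_eq (t : ℝ) : stretch t v = fun x => g (t ^ ((N:ℝ)/2) * f (v (t • x))) := by
  funext x
  show Function.invFun f _ = _
  rw [invFun_f]

lemma grad_cont (hv : ContDiff ℝ 1 v) : Continuous (fun y : E => gradient v y) := by
  have : (fun y : E => gradient v y)
      = fun y => (InnerProductSpace.toDual ℝ E).symm (fderiv ℝ v y) := rfl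
  rw [this]
  exact (InnerProductSpace.toDual ℝ E).symm.continuous.comp (hv.continuous_fderiv one_ne_zero)

lemma grad_supp (hsupp : HasCompactSupport v) :
    HasCompactSupport (fun y : E => gradient v y) := by
  have h1 : HasCompactSupport (fderiv ℝ v) := hsupp.fderiv (𝕜 := ℝ)
  exact h1.comp_left (g := (InnerProductSpace.toDual ℝ E).symm) (map_zero _)

lemma gradsq_cont (hv : ContDiff ℝ 1 v) : Continuous (fun y : E => ‖gradient v y‖ ^ 2) := by
  have := grad_cont hv
  fun_prop

lemma gradsq_supp (hsupp : HasCompactSupport v) :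
    HasCompactSupport (fun y : E => ‖gradient v y‖ ^ 2) :=
  (grad_supp (v := v) hsupp).comp_left (g := fun w : E => ‖w‖ ^ 2) (by simp)


lemma pointwise_kinetic {t F G : ℝ} (ht : 0 < t) (c : ℝ) (hc2 : c ^ 2 = t ^ (N:ℝ)) :
    ((t:ℝ) ^ (N:ℕ))⁻¹ * ((Real.sqrt (1 + 2 * (c * F) ^ 2)
      * (c * (Real.sqrt (1 + 2 * F ^ 2))⁻¹) * t) ^ 2 * G)
    = t ^ 2 * (((1 + 2 * t ^ (N:ℝ) * F ^ 2) / (1 + 2 * F ^ 2)) * G) := by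
  have e1 : (Real.sqrt (1 + 2 * (c * F) ^ 2)) ^ 2 = 1 + 2 * (c * F) ^ 2 :=
    Real.sq_sqrt (by positivity)
  have e2 : (Real.sqrt (1 + 2 * F ^ 2)) ^ 2 = 1 + 2 * F ^ 2 := Real.sq_sqrt (by positivity)
  have hB : (1 : ℝ) + 2 * F ^ 2 ≠ 0 := by positivity
  have htN : (0:ℝ) < t ^ (N:ℝ) := Real.rpow_pos_of_pos ht _
  rw [show (Real.sqrt (1 + 2 * (c * F) ^ 2) * (c * (Real.sqrt (1 + 2 * F ^ 2))⁻¹) * t) ^ 2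
      = (Real.sqrt (1 + 2 * (c * F) ^ 2)) ^ 2 * c ^ 2
        * ((Real.sqrt (1 + 2 * F ^ 2)) ^ 2)⁻¹ * t ^ 2 from by ring,
    e1, e2, mul_pow c F, hc2, ← Real.rpow_natCast t N]
  field_simp

lemma kinetic_formula (hv : ContDiff ℝ 1 v) {t : ℝ} (ht : 0 < t) :
    ∫ x : E, ‖gradient (stretch t v) x‖ ^ 2 =
      t ^ 2 * ∫ y : E, ((1 + 2 * t ^ (N:ℝ) * f (v y) ^ 2) / (1 + 2 * f (v y) ^ 2))
        * ‖gradient v y‖ ^ 2 := by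
  have hc2 : (t ^ ((N:ℝ)/2)) ^ 2 = t ^ (N:ℝ) := by
    rw [← Real.rpow_natCast (t ^ ((N:ℝ)/2)) 2, ← Real.rpow_mul ht.le]
    norm_num
  have h0 : (∫ x : E, ‖gradient (stretch t v) x‖ ^ 2) = ∫ x : E,
      (fun y : E => (Real.sqrt (1 + 2 * (t ^ ((N:ℝ)/2) * f (v y)) ^ 2)
      * (t ^ ((N:ℝ)/2) * (Real.sqrt (1 + 2 * (f (v y)) ^ 2))⁻¹) * t) ^ 2
      * ‖gradient v y‖ ^ 2) (t • x) := by
    refine integral_congr_ae (Filter.Eventually.of_forall fun x => ?_)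
    rw [stretch_eq t]
    exact gradient_comp_smul_norm_sq v (fun u => g (t ^ ((N:ℝ)/2) * f u)) t _ x
      ((hv.differentiable one_ne_zero) _) (phi_hasDerivAt (t ^ ((N:ℝ)/2)) (v (t • x)))
  have h1 := Measure.integral_comp_smul (μ := volume)
    (fun y : E => (Real.sqrt (1 + 2 * (t ^ ((N:ℝ)/2) * f (v y)) ^ 2)
      * (t ^ ((N:ℝ)/2) * (Real.sqrt (1 + 2 * (f (v y)) ^ 2))⁻¹) * t) ^ 2
      * ‖gradient v y‖ ^ 2) t
  rw [finrank_euclideanSpace_fin, abs_of_nonneg (by positivity), smul_eq_mul] at h1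
  rw [h0, h1, ← MeasureTheory.integral_const_mul, ← MeasureTheory.integral_const_mul]
  exact integral_congr_ae (Filter.Eventually.of_forall fun y =>
    pointwise_kinetic ht _ hc2)

lemma potential_formula {t : ℝ} (ht : 0 < t) :
    ∫ x : E, H (f (stretch t v x)) =
      t ^ (-(N:ℝ)) * ∫ y : E, H (t ^ ((N:ℝ)/2) * f (v y)) := by
  have h0 : (∫ x : E, H (f (stretch t v x))) = ∫ x : E,
      (fun y : E => H (t ^ ((N:ℝ)/2) * f (v y))) (t • x) := by
    refine integral_congr_ae (Filter.Eventually.of_forall fun x => ?_)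
    rw [stretch_eq t]
    show H (f (g _)) = _
    rw [f_g]
  have h1 := Measure.integral_comp_smul (μ := volume)
    (fun y : E => H (t ^ ((N:ℝ)/2) * f (v y))) t
  rw [finrank_euclideanSpace_fin, abs_of_nonneg (by positivity), smul_eq_mul] at h1
  rw [h0, h1, ← Real.rpow_natCast t N, ← Real.rpow_neg ht.le]

end Formula
lemma H_hasDerivAt {h H : ℝ → ℝ} (hcont : Continuous h)
    (hH : ∀ s : ℝ, H s = ∫ τ in (0:ℝ)..s, h τ) (u : ℝ) : HasDerivAt H (h u) u := by
  have hE : H = fun s => ∫ τ in (0:ℝ)..s, h τ := funext hH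
  rw [hE]
  exact (hcont.integral_hasStrictDerivAt 0 u).hasDerivAt

lemma H_zero {h H : ℝ → ℝ} (hH : ∀ s : ℝ, H s = ∫ τ in (0:ℝ)..s, h τ) : H 0 = 0 := by
  rw [hH 0, intervalIntegral.integral_same]

noncomputable def kf (ν F G : ℝ) (s : ℝ) : ℝ :=
  (s ^ (-ν) + (ν + 2) * F ^ 2) * (G / (1 + 2 * F ^ 2))

noncomputable def pf (ν : ℝ) (h H : ℝ → ℝ) (F : ℝ) (s : ℝ) : ℝ :=
  ν / 2 * s ^ (-(2 * ν + 2)) *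
    (h (s ^ (ν / 2) * F) * (s ^ (ν / 2) * F) - 2 * H (s ^ (ν / 2) * F))

noncomputable def Phif (ν : ℝ) (h H : ℝ → ℝ) (F G : ℝ) (s : ℝ) : ℝ :=
  (s ^ 2 + 2 * s ^ (ν + 2) * F ^ 2) * (G / (2 * (1 + 2 * F ^ 2)))
    - s ^ (-ν) * H (s ^ (ν / 2) * F)
    - ((s ^ (ν + 2) - 1) / (ν + 2)) * (kf ν F G 1 - pf ν h H F 1)

lemma kf_one (ν F G : ℝ) : kf ν F G 1 = (1 + (ν + 2) * F ^ 2) * (G / (1 + 2 * F ^ 2)) := by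
  simp [kf, Real.one_rpow]

lemma pf_one (ν : ℝ) (h H : ℝ → ℝ) (F : ℝ) :
    pf ν h H F 1 = ν / 2 * (h F * F - 2 * H F) := by
  simp [pf, Real.one_rpow]

lemma kf_antitone {ν F G : ℝ} (hν : 0 ≤ ν) (hG : 0 ≤ G) {s₁ s₂ : ℝ}
    (h1 : 0 < s₁) (h12 : s₁ ≤ s₂) : kf ν F G s₂ ≤ kf ν F G s₁ := by
  have h2 : s₂ ^ (-ν) ≤ s₁ ^ (-ν) := by
    rw [Real.rpow_neg h1.le, Real.rpow_neg (h1.trans_le h12).le]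
    apply inv_anti₀ (Real.rpow_pos_of_pos h1 ν)
    exact Real.rpow_le_rpow h1.le h12 hν
  have : (0:ℝ) ≤ G / (1 + 2 * F ^ 2) := by positivity
  exact mul_le_mul_of_nonneg_right (by linarith) this

lemma pf_mono {ν : ℝ} (hν0 : 0 < ν) {h H : ℝ → ℝ}
    (hH : ∀ s : ℝ, H s = ∫ τ in (0:ℝ)..s, h τ)
    (h3neg : MonotoneOn (fun u : ℝ => (h u * u - 2 * H u) / (|u| ^ ((3:ℝ) + 4 / ν) * u))
      (Set.Iio 0))
    (h3pos : MonotoneOn (fun u : ℝ => (h u * u - 2 * H u) / (|u| ^ ((3:ℝ) + 4 / ν) * u))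
      (Set.Ioi 0))
    (F : ℝ) {s₁ s₂ : ℝ} (h1 : 0 < s₁) (h12 : s₁ ≤ s₂) :
    pf ν h H F s₁ ≤ pf ν h H F s₂ := by
  have h2 : 0 < s₂ := h1.trans_le h12
  have hνne : ν ≠ 0 := ne_of_gt hν0
  have hXle : s₁ ^ (ν / 2) ≤ s₂ ^ (ν / 2) := Real.rpow_le_rpow h1.le h12 (by positivity)
  rcases lt_trichotomy F 0 with hF | hF | hF
  · -- F < 0
    have key : ∀ s : ℝ, 0 < s → pf ν h H F s =
        -(ν / 2 * (-F) ^ ((4:ℝ) + 4 / ν)) *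
          ((h (s ^ (ν / 2) * F) * (s ^ (ν / 2) * F) - 2 * H (s ^ (ν / 2) * F)) /
            (|s ^ (ν / 2) * F| ^ ((3:ℝ) + 4 / ν) * (s ^ (ν / 2) * F))) := by
      intro s hs
      have hX : 0 < s ^ (ν / 2) := Real.rpow_pos_of_pos hs _
      set u := s ^ (ν / 2) * F with hu_def
      have hu : u < 0 := mul_neg_of_pos_of_neg hX hF
      have hnu : (0:ℝ) < -u := by linarith
      have hden : |u| ^ ((3:ℝ) + 4 / ν) * u = -(s ^ (2 * ν + 2) * (-F) ^ ((4:ℝ) + 4 / ν)) := by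
        rw [abs_of_neg hu, show (-u) ^ ((3:ℝ) + 4 / ν) * u = -((-u) ^ ((3:ℝ) + 4 / ν) * (-u)) by
          ring, ← Real.rpow_add_one hnu.ne', show (3:ℝ) + 4 / ν + 1 = (4:ℝ) + 4 / ν by ring,
          show -u = s ^ (ν / 2) * (-F) by rw [hu_def]; ring,
          Real.mul_rpow hX.le (by linarith), ← Real.rpow_mul hs.le,
          show ν / 2 * ((4:ℝ) + 4 / ν) = 2 * ν + 2 by field_simp; ring]
      have hinv : s ^ (-(2 * ν + 2)) = (s ^ (2 * ν + 2))⁻¹ := Real.rpow_neg hs.le _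
      have hane : s ^ (2 * ν + 2) ≠ 0 := (Real.rpow_pos_of_pos hs _).ne'
      have hcF : (-F) ^ ((4:ℝ) + 4 / ν) ≠ 0 :=
        (Real.rpow_pos_of_pos (by linarith) _).ne'
      rw [pf, ← hu_def, hden, hinv]
      generalize hA : s ^ (2 * ν + 2) = a at hane ⊢
      generalize hC : (-F) ^ ((4:ℝ) + 4 / ν) = c at hcF ⊢
      field_simp
    have hu1 : s₁ ^ (ν / 2) * F ∈ Set.Iio (0:ℝ) :=
      mul_neg_of_pos_of_neg (Real.rpow_pos_of_pos h1 _) hF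
    have hu2 : s₂ ^ (ν / 2) * F ∈ Set.Iio (0:ℝ) :=
      mul_neg_of_pos_of_neg (Real.rpow_pos_of_pos h2 _) hF
    have hu21 : s₂ ^ (ν / 2) * F ≤ s₁ ^ (ν / 2) * F :=
      mul_le_mul_of_nonpos_right hXle hF.le
    have hQ := h3neg hu2 hu1 hu21
    simp only at hQ
    rw [key s₁ h1, key s₂ h2]
    have hc : (0:ℝ) ≤ ν / 2 * (-F) ^ ((4:ℝ) + 4 / ν) := by
      have := Real.rpow_nonneg (show (0:ℝ) ≤ -F by linarith) ((4:ℝ) + 4 / ν)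
      positivity
    exact mul_le_mul_of_nonpos_left hQ (neg_nonpos.mpr hc)
  · -- F = 0
    simp [pf, hF, H_zero hH]
  · -- F > 0
    have key : ∀ s : ℝ, 0 < s → pf ν h H F s =
        (ν / 2 * F ^ ((4:ℝ) + 4 / ν)) *
          ((h (s ^ (ν / 2) * F) * (s ^ (ν / 2) * F) - 2 * H (s ^ (ν / 2) * F)) /
            (|s ^ (ν / 2) * F| ^ ((3:ℝ) + 4 / ν) * (s ^ (ν / 2) * F))) := by
      intro s hs
      have hX : 0 < s ^ (ν / 2) := Real.rpow_pos_of_pos hs _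
      set u := s ^ (ν / 2) * F with hu_def
      have hu : 0 < u := mul_pos hX hF
      have hden : |u| ^ ((3:ℝ) + 4 / ν) * u = s ^ (2 * ν + 2) * F ^ ((4:ℝ) + 4 / ν) := by
        rw [abs_of_pos hu, ← Real.rpow_add_one hu.ne',
          show (3:ℝ) + 4 / ν + 1 = (4:ℝ) + 4 / ν by ring, hu_def,
          Real.mul_rpow hX.le hF.le, ← Real.rpow_mul hs.le,
          show ν / 2 * ((4:ℝ) + 4 / ν) = 2 * ν + 2 by field_simp; ring]
      have hinv : s ^ (-(2 * ν + 2)) = (s ^ (2 * ν + 2))⁻¹ := Real.rpow_neg hs.le _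
      have hane : s ^ (2 * ν + 2) ≠ 0 := (Real.rpow_pos_of_pos hs _).ne'
      have hcF : F ^ ((4:ℝ) + 4 / ν) ≠ 0 := (Real.rpow_pos_of_pos hF _).ne'
      rw [pf, ← hu_def, hden, hinv]
      generalize hA : s ^ (2 * ν + 2) = a at hane ⊢
      generalize hC : F ^ ((4:ℝ) + 4 / ν) = c at hcF ⊢
      field_simp
    have hu1 : s₁ ^ (ν / 2) * F ∈ Set.Ioi (0:ℝ) :=
      mul_pos (Real.rpow_pos_of_pos h1 _) hF
    have hu2 : s₂ ^ (ν / 2) * F ∈ Set.Ioi (0:ℝ) :=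
      mul_pos (Real.rpow_pos_of_pos h2 _) hF
    have hu12 : s₁ ^ (ν / 2) * F ≤ s₂ ^ (ν / 2) * F :=
      mul_le_mul_of_nonneg_right hXle hF.le
    have hQ := h3pos hu1 hu2 hu12
    simp only at hQ
    rw [key s₁ h1, key s₂ h2]
    have hc : (0:ℝ) ≤ ν / 2 * F ^ ((4:ℝ) + 4 / ν) := by
      have := Real.rpow_nonneg hF.le ((4:ℝ) + 4 / ν)
      positivity
    exact mul_le_mul_of_nonneg_left hQ hc

lemma Phi_hasDerivAt {ν : ℝ} (hν0 : 0 < ν) {h H : ℝ → ℝ} (hcont : Continuous h)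
    (hH : ∀ s : ℝ, H s = ∫ τ in (0:ℝ)..s, h τ) (F G : ℝ) {s : ℝ} (hs : 0 < s) :
    HasDerivAt (Phif ν h H F G)
      (s ^ (ν + 1) * (kf ν F G s - pf ν h H F s - (kf ν F G 1 - pf ν h H F 1))) s := by
  have hνne : ν ≠ 0 := ne_of_gt hν0
  have d2 : HasDerivAt (fun s : ℝ => s ^ (ν + 2)) ((ν + 2) * s ^ (ν + 2 - 1)) s :=
    Real.hasDerivAt_rpow_const (Or.inl hs.ne')
  have d3 : HasDerivAt (fun s : ℝ => s ^ (-ν)) ((-ν) * s ^ (-ν - 1)) s :=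
    Real.hasDerivAt_rpow_const (Or.inl hs.ne')
  have d4 : HasDerivAt (fun s : ℝ => s ^ (ν / 2) * F) ((ν / 2) * s ^ (ν / 2 - 1) * F) s :=
    (Real.hasDerivAt_rpow_const (Or.inl hs.ne')).mul_const F
  have d5 : HasDerivAt (fun s : ℝ => H (s ^ (ν / 2) * F))
      (h (s ^ (ν / 2) * F) * ((ν / 2) * s ^ (ν / 2 - 1) * F)) s :=
    (H_hasDerivAt hcont hH _).comp s d4
  have d1 : HasDerivAt (fun s : ℝ => s ^ 2) (2 * s) s := by
    simpa using hasDerivAt_pow 2 s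
  have dA := (d1.add ((d2.const_mul 2).mul_const (F ^ 2))).mul_const (G / (2 * (1 + 2 * F ^ 2)))
  have dB := d3.mul d5
  have dC := ((d2.sub_const 1).div_const (ν + 2)).mul_const (kf ν F G 1 - pf ν h H F 1)
  have dPhi := (dA.sub dB).sub dC
  have hfun : HasDerivAt (Phif ν h H F G)
      ((2 * s + 2 * ((ν + 2) * s ^ (ν + 2 - 1)) * F ^ 2) * (G / (2 * (1 + 2 * F ^ 2)))
        - ((-ν) * s ^ (-ν - 1) * H (s ^ (ν / 2) * F)
            + s ^ (-ν) * (h (s ^ (ν / 2) * F) * ((ν / 2) * s ^ (ν / 2 - 1) * F)))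
        - ((ν + 2) * s ^ (ν + 2 - 1) / (ν + 2)) * (kf ν F G 1 - pf ν h H F 1)) s := dPhi
  convert hfun using 1
  have hX : 0 < s ^ (ν / 2) := Real.rpow_pos_of_pos hs _
  have E1 : s ^ (ν + 1) = s ^ (ν / 2) * s ^ (ν / 2) * s := by
    rw [show ν + 1 = ν / 2 + ν / 2 + 1 by ring, Real.rpow_add hs, Real.rpow_add hs,
      Real.rpow_one]
  have E6 : s ^ (ν + 2 - 1) = s ^ (ν / 2) * s ^ (ν / 2) * s := by
    rw [show ν + 2 - 1 = ν / 2 + ν / 2 + 1 by ring, Real.rpow_add hs, Real.rpow_add hs,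
      Real.rpow_one]
  have E2 : s ^ (-ν) = (s ^ (ν / 2) * s ^ (ν / 2))⁻¹ := by
    rw [show -ν = -(ν / 2 + ν / 2) by ring, Real.rpow_neg hs.le, Real.rpow_add hs]
  have E3 : s ^ (-ν - 1) = (s ^ (ν / 2) * s ^ (ν / 2) * s)⁻¹ := by
    rw [show -ν - 1 = -(ν / 2 + ν / 2 + 1) by ring, Real.rpow_neg hs.le, Real.rpow_add hs,
      Real.rpow_add hs, Real.rpow_one]
  have E4 : s ^ (ν / 2 - 1) = s ^ (ν / 2) * s⁻¹ := by
    rw [show ν / 2 - 1 = ν / 2 + (-1) by ring, Real.rpow_add hs, Real.rpow_neg_one]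
  have E5 : s ^ (-(2 * ν + 2)) =
      (s ^ (ν / 2) * s ^ (ν / 2) * (s ^ (ν / 2) * s ^ (ν / 2)) * (s * s))⁻¹ := by
    rw [show -(2 * ν + 2) = -(ν / 2 + ν / 2 + (ν / 2 + ν / 2) + (1 + 1)) by ring,
      Real.rpow_neg hs.le, Real.rpow_add hs, Real.rpow_add hs, Real.rpow_add hs,
      Real.rpow_add hs, Real.rpow_one]
  simp only [kf, pf]
  rw [E1, E2, E3, E4, E5, E6]
  have hXne : s ^ (ν / 2) ≠ 0 := hX.ne'
  have hsne : s ≠ 0 := hs.ne'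
  have hB : (1:ℝ) + 2 * F ^ 2 ≠ 0 := by positivity
  have hν2 : ν + 2 ≠ 0 := by linarith
  field_simp
  ring

lemma keylemma {ν : ℝ} (hν0 : 0 < ν) {h H : ℝ → ℝ} (hcont : Continuous h)
    (hH : ∀ s : ℝ, H s = ∫ τ in (0:ℝ)..s, h τ)
    (h3neg : MonotoneOn (fun u : ℝ => (h u * u - 2 * H u) / (|u| ^ ((3:ℝ) + 4 / ν) * u))
      (Set.Iio 0))
    (h3pos : MonotoneOn (fun u : ℝ => (h u * u - 2 * H u) / (|u| ^ ((3:ℝ) + 4 / ν) * u))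
      (Set.Ioi 0))
    (F G : ℝ) (hG : 0 ≤ G) {t : ℝ} (ht : 0 < t) :
    Phif ν h H F G t ≤ Phif ν h H F G 1 := by
  rcases le_total 1 t with h1t | ht1
  · have hanti : AntitoneOn (Phif ν h H F G) (Set.Icc 1 t) := by
      apply antitoneOn_of_deriv_nonpos (convex_Icc 1 t)
      · intro x hx
        have hx0 : (0:ℝ) < x := lt_of_lt_of_le one_pos hx.1
        exact (Phi_hasDerivAt hν0 hcont hH F G hx0).continuousAt.continuousWithinAt
      · intro x hx
        rw [interior_Icc] at hx
        have hx0 : (0:ℝ) < x := lt_trans one_pos hx.1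
        exact (Phi_hasDerivAt hν0 hcont hH F G hx0).differentiableAt.differentiableWithinAt
      · intro x hx
        rw [interior_Icc] at hx
        have hx0 : (0:ℝ) < x := lt_trans one_pos hx.1
        rw [(Phi_hasDerivAt hν0 hcont hH F G hx0).deriv]
        have hk := kf_antitone (ν := ν) (F := F) hν0.le hG one_pos hx.1.le
        have hp := pf_mono hν0 hH h3neg h3pos F one_pos hx.1.le
        have hle : kf ν F G x - pf ν h H F x - (kf ν F G 1 - pf ν h H F 1) ≤ 0 := by linarith
        have := mul_le_mul_of_nonneg_left hle (Real.rpow_nonneg hx0.le (ν + 1))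
        simpa using this
    exact hanti (Set.left_mem_Icc.mpr h1t) (Set.right_mem_Icc.mpr h1t) h1t
  · have hmono : MonotoneOn (Phif ν h H F G) (Set.Icc t 1) := by
      apply monotoneOn_of_deriv_nonneg (convex_Icc t 1)
      · intro x hx
        have hx0 : (0:ℝ) < x := lt_of_lt_of_le ht hx.1
        exact (Phi_hasDerivAt hν0 hcont hH F G hx0).continuousAt.continuousWithinAt
      · intro x hx
        rw [interior_Icc] at hx
        have hx0 : (0:ℝ) < x := lt_trans ht hx.1
        exact (Phi_hasDerivAt hν0 hcont hH F G hx0).differentiableAt.differentiableWithinAt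
      · intro x hx
        rw [interior_Icc] at hx
        have hx0 : (0:ℝ) < x := lt_trans ht hx.1
        rw [(Phi_hasDerivAt hν0 hcont hH F G hx0).deriv]
        have hk := kf_antitone (ν := ν) (F := F) hν0.le hG hx0 hx.2.le
        have hp := pf_mono hν0 hH h3neg h3pos F hx0 hx.2.le
        have hle : 0 ≤ kf ν F G x - pf ν h H F x - (kf ν F G 1 - pf ν h H F 1) := by linarith
        exact mul_nonneg (Real.rpow_nonneg hx0.le _) hle
    exact hmono (Set.left_mem_Icc.mpr ht1) (Set.right_mem_Icc.mpr ht1) ht1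

lemma key_ineq (N : ℕ) (hN : 1 ≤ N) (h H : ℝ → ℝ) (hcont : Continuous h)
    (hH : ∀ s : ℝ, H s = ∫ τ in (0:ℝ)..s, h τ)
    (h3neg : MonotoneOn (fun u : ℝ => (h u * u - 2 * H u) / (|u| ^ ((3:ℝ) + 4 / (N:ℝ)) * u))
      (Set.Iio 0))
    (h3pos : MonotoneOn (fun u : ℝ => (h u * u - 2 * H u) / (|u| ^ ((3:ℝ) + 4 / (N:ℝ)) * u))
      (Set.Ioi 0))
    (F G : ℝ) (hG : 0 ≤ G) {t : ℝ} (ht : 0 < t) :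
    ((t ^ 2 + 2 * t ^ ((N:ℝ) + 2) * F ^ 2) * (G / (2 * (1 + 2 * F ^ 2)))
        - t ^ (-(N:ℝ)) * H (t ^ ((N:ℝ) / 2) * F))
      - (((1:ℝ) ^ 2 + 2 * (1:ℝ) ^ ((N:ℝ) + 2) * F ^ 2) * (G / (2 * (1 + 2 * F ^ 2)))
        - (1:ℝ) ^ (-(N:ℝ)) * H ((1:ℝ) ^ ((N:ℝ) / 2) * F))
    ≤ ((t ^ ((N:ℝ) + 2) - 1) / ((N:ℝ) + 2)) *
        ((1 + ((N:ℝ) + 2) * F ^ 2) * (G / (1 + 2 * F ^ 2))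
          - (N:ℝ) / 2 * (h F * F - 2 * H F)) := by
  have hν0 : (0:ℝ) < (N:ℝ) := by exact_mod_cast Nat.lt_of_lt_of_le Nat.zero_lt_one hN
  have hkey := keylemma hν0 hcont hH h3neg h3pos F G hG ht
  have hC1 : (((1:ℝ) ^ ((N:ℝ) + 2) - 1) / ((N:ℝ) + 2)) = 0 := by
    rw [Real.one_rpow]; simp
  rw [Phif, Phif, hC1, zero_mul, sub_zero] at hkey
  rw [← kf_one (N:ℝ) F G, ← pf_one (N:ℝ) h H F]
  linarith

/-- If `𝒢(v) = 0`, then under (h3), `Ψ(v) = max_{t>0} Ψ(v_t)`. -/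
theorem stmt_6 (N : ℕ) (hN : 1 ≤ N) (h H : ℝ → ℝ) (hcont : Continuous h)
    (hH : ∀ s : ℝ, H s = ∫ τ in (0:ℝ)..s, h τ)
    (h3neg : MonotoneOn (fun t : ℝ => (h t * t - 2 * H t) / (|t| ^ ((3:ℝ) + 4 / (N:ℝ)) * t))
      (Set.Iio 0))
    (h3pos : MonotoneOn (fun t : ℝ => (h t * t - 2 * H t) / (|t| ^ ((3:ℝ) + 4 / (N:ℝ)) * t))
      (Set.Ioi 0))
    (v : EuclideanSpace ℝ (Fin N) → ℝ) (hv : ContDiff ℝ 1 v)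
    (hsupp : HasCompactSupport v) (hG : Gfun h H v = 0) :
    (stretch 1 v = v) ∧ ∀ t : ℝ, 0 < t → Psi H (stretch t v) ≤ Psi H v := by
  have hone : stretch 1 v = v := by
    funext x
    show Function.invFun f ((1:ℝ) ^ ((N:ℝ) / 2) * f (v ((1:ℝ) • x))) = v x
    rw [Real.one_rpow, one_mul, one_smul, invFun_f, g_f]
  refine ⟨hone, fun t ht => ?_⟩
  have hHcont : Continuous H :=
    continuous_iff_continuousAt.mpr fun u => (H_hasDerivAt hcont hH u).continuousAt
  have hFcont : Continuous (fun y : EuclideanSpace ℝ (Fin N) => f (v y)) :=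
    f_cont.comp hv.continuous
  have hGcont := gradsq_cont hv
  have hGsupp := gradsq_supp hsupp
  have hBden : ∀ y : EuclideanSpace ℝ (Fin N), (1:ℝ) + 2 * f (v y) ^ 2 ≠ 0 :=
    fun y => by positivity
  -- The Psi formula
  have hPsi : ∀ s : ℝ, 0 < s → Psi H (stretch s v) =
      ∫ y : EuclideanSpace ℝ (Fin N),
        ((s ^ 2 + 2 * s ^ ((N:ℝ) + 2) * f (v y) ^ 2)
            * (‖gradient v y‖ ^ 2 / (2 * (1 + 2 * f (v y) ^ 2)))
          - s ^ (-(N:ℝ)) * H (s ^ ((N:ℝ) / 2) * f (v y))) := by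
    intro s hs
    have hs2 : s ^ ((N:ℝ) + 2) = s ^ (N:ℝ) * s ^ 2 := by
      rw [Real.rpow_add hs]
      congr 1
      rw [← Real.rpow_natCast s 2]
      norm_num
    -- integrability of the two pieces
    have hT1cont : Continuous (fun y : EuclideanSpace ℝ (Fin N) =>
        (s ^ 2 + 2 * s ^ ((N:ℝ) + 2) * f (v y) ^ 2)
          * (‖gradient v y‖ ^ 2 / (2 * (1 + 2 * f (v y) ^ 2)))) := by
      apply Continuous.mul (by fun_prop)
      apply Continuous.div (by fun_prop) (by fun_prop)
      intro y
      positivity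
    have hT1supp : HasCompactSupport (fun y : EuclideanSpace ℝ (Fin N) =>
        (s ^ 2 + 2 * s ^ ((N:ℝ) + 2) * f (v y) ^ 2)
          * (‖gradient v y‖ ^ 2 / (2 * (1 + 2 * f (v y) ^ 2)))) := by
      apply hGsupp.mono
      intro y hy
      simp only [Function.mem_support] at hy ⊢
      intro hzero
      apply hy
      rw [hzero]
      simp
    have hT2cont : Continuous (fun y : EuclideanSpace ℝ (Fin N) =>
        s ^ (-(N:ℝ)) * H (s ^ ((N:ℝ) / 2) * f (v y))) := by fun_prop
    have hT2supp : HasCompactSupport (fun y : EuclideanSpace ℝ (Fin N) =>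
        s ^ (-(N:ℝ)) * H (s ^ ((N:ℝ) / 2) * f (v y))) := by
      apply hsupp.mono
      intro y hy
      simp only [Function.mem_support] at hy ⊢
      intro hzero
      apply hy
      rw [hzero, f_zero, mul_zero, H_zero hH, mul_zero]
    have hT1int := Continuous.integrable_of_hasCompactSupport (μ := volume) hT1cont hT1supp
    have hT2int := Continuous.integrable_of_hasCompactSupport (μ := volume) hT2cont hT2supp
    rw [Psi, kinetic_formula hv hs, potential_formula hs,
      ← MeasureTheory.integral_const_mul, ← MeasureTheory.integral_const_mul,
      ← MeasureTheory.integral_const_mul]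
    have hcong : (∫ a : EuclideanSpace ℝ (Fin N),
        1 / 2 * (s ^ 2 * ((1 + 2 * s ^ (N:ℝ) * f (v a) ^ 2) / (1 + 2 * f (v a) ^ 2)
          * ‖gradient v a‖ ^ 2)))
        = ∫ a : EuclideanSpace ℝ (Fin N),
          (s ^ 2 + 2 * s ^ ((N:ℝ) + 2) * f (v a) ^ 2)
            * (‖gradient v a‖ ^ 2 / (2 * (1 + 2 * f (v a) ^ 2))) := by
      refine integral_congr_ae (Filter.Eventually.of_forall fun a => ?_)
      have hB := hBden a
      rw [hs2]
      field_simp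
    rw [hcong, ← integral_sub hT1int hT2int]
  -- integrability of B t and B 1
  have hBint : ∀ s : ℝ, Integrable (fun y : EuclideanSpace ℝ (Fin N) =>
      (s ^ 2 + 2 * s ^ ((N:ℝ) + 2) * f (v y) ^ 2)
          * (‖gradient v y‖ ^ 2 / (2 * (1 + 2 * f (v y) ^ 2)))
        - s ^ (-(N:ℝ)) * H (s ^ ((N:ℝ) / 2) * f (v y))) := by
    intro s
    have hT1cont : Continuous (fun y : EuclideanSpace ℝ (Fin N) =>
        (s ^ 2 + 2 * s ^ ((N:ℝ) + 2) * f (v y) ^ 2)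
          * (‖gradient v y‖ ^ 2 / (2 * (1 + 2 * f (v y) ^ 2)))) := by
      apply Continuous.mul (by fun_prop)
      apply Continuous.div (by fun_prop) (by fun_prop)
      intro y
      positivity
    have hT1supp : HasCompactSupport (fun y : EuclideanSpace ℝ (Fin N) =>
        (s ^ 2 + 2 * s ^ ((N:ℝ) + 2) * f (v y) ^ 2)
          * (‖gradient v y‖ ^ 2 / (2 * (1 + 2 * f (v y) ^ 2)))) := by
      apply hGsupp.mono
      intro y hy
      simp only [Function.mem_support] at hy ⊢
      intro hzero
      apply hy
      rw [hzero]
      simp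
    have hT2cont : Continuous (fun y : EuclideanSpace ℝ (Fin N) =>
        s ^ (-(N:ℝ)) * H (s ^ ((N:ℝ) / 2) * f (v y))) := by fun_prop
    have hT2supp : HasCompactSupport (fun y : EuclideanSpace ℝ (Fin N) =>
        s ^ (-(N:ℝ)) * H (s ^ ((N:ℝ) / 2) * f (v y))) := by
      apply hsupp.mono
      intro y hy
      simp only [Function.mem_support] at hy ⊢
      intro hzero
      apply hy
      rw [hzero, f_zero, mul_zero, H_zero hH, mul_zero]
    exact (hT1cont.integrable_of_hasCompactSupport hT1supp).sub
      (hT2cont.integrable_of_hasCompactSupport hT2supp)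
  -- the chi function and its integral
  have hχcont : Continuous (fun y : EuclideanSpace ℝ (Fin N) =>
      (1 + ((N:ℝ) + 2) * f (v y) ^ 2) * (‖gradient v y‖ ^ 2 / (1 + 2 * f (v y) ^ 2))
        - (N:ℝ) / 2 * (h (f (v y)) * f (v y) - 2 * H (f (v y)))) := by
    apply Continuous.sub
    · apply Continuous.mul (by fun_prop)
      apply Continuous.div (by fun_prop) (by fun_prop)
      intro y
      positivity
    · fun_prop
  have hχ1supp : HasCompactSupport (fun y : EuclideanSpace ℝ (Fin N) =>
      (1 + ((N:ℝ) + 2) * f (v y) ^ 2) * (‖gradient v y‖ ^ 2 / (1 + 2 * f (v y) ^ 2))) := by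
    apply hGsupp.mono
    intro y hy
    simp only [Function.mem_support] at hy ⊢
    intro hzero
    apply hy
    rw [hzero]
    simp
  have hχ2supp : HasCompactSupport (fun y : EuclideanSpace ℝ (Fin N) =>
      (N:ℝ) / 2 * (h (f (v y)) * f (v y) - 2 * H (f (v y)))) := by
    apply hsupp.mono
    intro y hy
    simp only [Function.mem_support] at hy ⊢
    intro hzero
    apply hy
    rw [hzero, f_zero, H_zero hH]
    simp
  have hχ1cont : Continuous (fun y : EuclideanSpace ℝ (Fin N) =>
      (1 + ((N:ℝ) + 2) * f (v y) ^ 2) * (‖gradient v y‖ ^ 2 / (1 + 2 * f (v y) ^ 2))) := by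
    apply Continuous.mul (by fun_prop)
    apply Continuous.div (by fun_prop) (by fun_prop)
    intro y
    positivity
  have hχ2cont : Continuous (fun y : EuclideanSpace ℝ (Fin N) =>
      (N:ℝ) / 2 * (h (f (v y)) * f (v y) - 2 * H (f (v y)))) := by fun_prop
  have hχint : Integrable (fun y : EuclideanSpace ℝ (Fin N) =>
      (1 + ((N:ℝ) + 2) * f (v y) ^ 2) * (‖gradient v y‖ ^ 2 / (1 + 2 * f (v y) ^ 2))
        - (N:ℝ) / 2 * (h (f (v y)) * f (v y) - 2 * H (f (v y)))) :=
    (hχ1cont.integrable_of_hasCompactSupport hχ1supp).sub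
      (hχ2cont.integrable_of_hasCompactSupport hχ2supp)
  -- ∫ χ = Gfun v = 0
  have hχzero : (∫ y : EuclideanSpace ℝ (Fin N),
      ((1 + ((N:ℝ) + 2) * f (v y) ^ 2) * (‖gradient v y‖ ^ 2 / (1 + 2 * f (v y) ^ 2))
        - (N:ℝ) / 2 * (h (f (v y)) * f (v y) - 2 * H (f (v y))))) = 0 := by
    have hWcont : Continuous (fun y : EuclideanSpace ℝ (Fin N) =>
        2 * f (v y) ^ 2 / (1 + 2 * f (v y) ^ 2) * ‖gradient v y‖ ^ 2) := by
      apply Continuous.mul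
      apply Continuous.div (by fun_prop) (by fun_prop)
      intro y; positivity
      exact hGcont
    have hWsupp : HasCompactSupport (fun y : EuclideanSpace ℝ (Fin N) =>
        2 * f (v y) ^ 2 / (1 + 2 * f (v y) ^ 2) * ‖gradient v y‖ ^ 2) := by
      apply hGsupp.mono
      intro y hy
      simp only [Function.mem_support] at hy ⊢
      intro hzero
      apply hy
      rw [hzero]
      simp
    have hWint := Continuous.integrable_of_hasCompactSupport (μ := volume) hWcont hWsupp
    have hGint := Continuous.integrable_of_hasCompactSupport (μ := volume) hGcont hGsupp
    have hTcont : Continuous (fun y : EuclideanSpace ℝ (Fin N) =>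
        h (f (v y)) * f (v y) - 2 * H (f (v y))) := by fun_prop
    have hTsupp : HasCompactSupport (fun y : EuclideanSpace ℝ (Fin N) =>
        h (f (v y)) * f (v y) - 2 * H (f (v y))) := by
      apply hsupp.mono
      intro y hy
      simp only [Function.mem_support] at hy ⊢
      intro hzero
      apply hy
      rw [hzero, f_zero, H_zero hH]
      simp
    have hTint := Continuous.integrable_of_hasCompactSupport (μ := volume) hTcont hTsupp
    have step1 : (∫ y : EuclideanSpace ℝ (Fin N),
        ((1 + ((N:ℝ) + 2) * f (v y) ^ 2) * (‖gradient v y‖ ^ 2 / (1 + 2 * f (v y) ^ 2))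
          - (N:ℝ) / 2 * (h (f (v y)) * f (v y) - 2 * H (f (v y)))))
        = ∫ y : EuclideanSpace ℝ (Fin N),
        ((‖gradient v y‖ ^ 2 + (N:ℝ) / 2 *
            (2 * f (v y) ^ 2 / (1 + 2 * f (v y) ^ 2) * ‖gradient v y‖ ^ 2))
          - (N:ℝ) / 2 * (h (f (v y)) * f (v y) - 2 * H (f (v y)))) := by
      refine integral_congr_ae (Filter.Eventually.of_forall fun y => ?_)
      have hB := hBden y
      field_simp
      ring
    have hWint' : Integrable (fun y : EuclideanSpace ℝ (Fin N) =>
        (N:ℝ) / 2 * (2 * f (v y) ^ 2 / (1 + 2 * f (v y) ^ 2) * ‖gradient v y‖ ^ 2)) volume :=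
      hWint.const_mul _
    have hTint' : Integrable (fun y : EuclideanSpace ℝ (Fin N) =>
        (N:ℝ) / 2 * (h (f (v y)) * f (v y) - 2 * H (f (v y)))) volume :=
      hTint.const_mul _
    have hsum : Integrable (fun y : EuclideanSpace ℝ (Fin N) =>
        ‖gradient v y‖ ^ 2 + (N:ℝ) / 2 *
          (2 * f (v y) ^ 2 / (1 + 2 * f (v y) ^ 2) * ‖gradient v y‖ ^ 2)) volume :=
      hGint.add hWint'
    rw [step1, integral_sub hsum hTint', integral_add hGint hWint',
      MeasureTheory.integral_const_mul, MeasureTheory.integral_const_mul]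
    rw [Gfun] at hG
    linarith
  -- conclude
  have hPsit := hPsi t ht
  have hPsi1 := hPsi 1 one_pos
  rw [hone] at hPsi1
  rw [hPsit, hPsi1, ← sub_nonpos, ← integral_sub (hBint t) (hBint 1)]
  have hmono : (∫ y : EuclideanSpace ℝ (Fin N),
      (((t ^ 2 + 2 * t ^ ((N:ℝ) + 2) * f (v y) ^ 2)
            * (‖gradient v y‖ ^ 2 / (2 * (1 + 2 * f (v y) ^ 2)))
          - t ^ (-(N:ℝ)) * H (t ^ ((N:ℝ) / 2) * f (v y)))
        - (((1:ℝ) ^ 2 + 2 * (1:ℝ) ^ ((N:ℝ) + 2) * f (v y) ^ 2)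
            * (‖gradient v y‖ ^ 2 / (2 * (1 + 2 * f (v y) ^ 2)))
          - (1:ℝ) ^ (-(N:ℝ)) * H ((1:ℝ) ^ ((N:ℝ) / 2) * f (v y)))))
      ≤ ∫ y : EuclideanSpace ℝ (Fin N),
        ((t ^ ((N:ℝ) + 2) - 1) / ((N:ℝ) + 2)) *
          ((1 + ((N:ℝ) + 2) * f (v y) ^ 2) * (‖gradient v y‖ ^ 2 / (1 + 2 * f (v y) ^ 2))
            - (N:ℝ) / 2 * (h (f (v y)) * f (v y) - 2 * H (f (v y)))) := by
    refine integral_mono ((hBint t).sub (hBint 1)) (hχint.const_mul _) fun y => ?_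
    exact key_ineq N hN h H hcont hH h3neg h3pos (f (v y)) (‖gradient v y‖ ^ 2)
      (by positivity) ht
  calc _ ≤ _ := hmono
    _ = 0 := by rw [MeasureTheory.integral_const_mul, hχzero, mul_zero]
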